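/- Let C(x) = Σ c_k x^k/k! satisfy C(x) - x²/2 = log(1+C(x)) with c_1 = 1. Then C'(x)·C(x) = x·C(x) + x, and consequently for k ≥ 2, c_k = (1/(k+1))·( k·c_{k-1} - Σ_{j=1}^{k-2} C(k,j)·c_{j+1}·c_{k-j} ). -/

import Mathlib

/-- Composition `f ∘ g` of formal power series (intended for `g` with zero constant term). -/
noncomputable def pcomp {A : Type*} [CommRing A] (f g : PowerSeries A) : PowerSeries A :=
  PowerSeries.mk fun n =>
    PowerSeries.coeff n
      (∑ k ∈ Finset.range (n + 1), PowerSeries.C (PowerSeries.coeff k f) * g ^ k)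

/-- The formal power series `log(1+X) = Σ_{n≥1} (-1)^{n+1} X^n/n`. -/
noncomputable def logOneAdd : PowerSeries ℚ :=
  PowerSeries.mk fun n => if n = 0 then 0 else (-1 : ℚ) ^ (n + 1) / n

/-!
Differentiating `C - x²/2 = log (1 + C)` gives `C' - x = C' / (1 + C)`, i.e. `(1 + C)(C' - x) = C'`,
which is `C' C = x C + x`. Reading off the coefficient of `x^k / k!` (Leibniz rule for exponential
generating functions) gives `Σ_{p=0}^{k} C(k,p) c_{p+1} c_{k-p} = k c_{k-1}`, in which the terms
`p = 0`, `p = k - 1`, `p = k` contribute `c_k`, `k c_k` and `0`.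
-/

open PowerSeries Finset
open scoped Nat

theorem pcomp_eq_subst {A : Type*} [CommRing A] (f : A⟦X⟧) {g : A⟦X⟧}
    (hg : constantCoeff g = 0) : pcomp f g = f.subst g := by
  ext n
  have hpow : ∀ d, n < d → coeff n (g ^ d) = 0 := fun d hd =>
    X_pow_dvd_iff.mp (pow_dvd_pow_of_dvd (X_dvd_iff.mpr hg) d) n hd
  rw [pcomp, coeff_mk, coeff_subst' (HasSubst.of_constantCoeff_zero' hg),
    finsum_eq_sum_of_support_subset (s := range (n + 1)), map_sum]
  · simp only [coeff_C_mul, smul_eq_mul]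
  · intro d hd
    by_contra hdn
    exact hd (by simp [hpow d (by simpa using hdn)])

theorem derivative_logOneAdd_mul_one_add_X : derivative ℚ logOneAdd * (1 + X) = 1 := by
  ext (_ | n)
  · simp only [mul_add, mul_one, map_add, coeff_zero_mul_X, add_zero, coeff_derivative]
    simp [logOneAdd]
  · simp [mul_add, coeff_derivative, logOneAdd, coeff_succ_mul_X, coeff_one]
    field_simp
    ring

theorem derivative_mul_self_eq_X_mul_add_X {C : ℚ⟦X⟧} (hC0 : constantCoeff C = 0)
    (hC : C - (1 / 2 : ℚ) • X ^ 2 = pcomp logOneAdd C) :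
    derivative ℚ C * C = X * C + X := by
  have hsubst := HasSubst.of_constantCoeff_zero' hC0
  have hX : derivative ℚ ((1 / 2 : ℚ) • X ^ 2 : ℚ⟦X⟧) = X := by
    rw [Derivation.map_smul]
    simp [two_mul, smul_add, ← add_smul]
    norm_num
  have hderiv := congrArg (derivative ℚ) hC
  rw [pcomp_eq_subst _ hC0, derivative_subst hsubst, map_sub, hX, ← coe_substAlgHom hsubst]
    at hderiv
  have hinv := congrArg (substAlgHom hsubst) derivative_logOneAdd_mul_one_add_X
  rw [map_mul, map_add, map_one, substAlgHom_X] at hinv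
  linear_combination (1 + C) * hderiv + derivative ℚ C * hinv

theorem factorial_mul_coeff_derivative_mul {A : Type*} [CommSemiring A] (f g : A⟦X⟧) (k : ℕ) :
    (k ! : A) * coeff k (derivative A f * g) =
      ∑ p ∈ range (k + 1),
        (k.choose p : A) * ((p + 1)! * coeff (p + 1) f) * ((k - p)! * coeff (k - p) g) := by
  rw [coeff_mul, Nat.sum_antidiagonal_eq_sum_range_succ_mk, mul_sum]
  refine sum_congr rfl fun p hp => ?_
  have hfact : (k.choose p * (p + 1)! * (k - p)! : A) = k ! * (p + 1) := by
    rw [Nat.factorial_succ, ← Nat.choose_mul_factorial_mul_factorial (mem_range_succ_iff.mp hp)]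
    push_cast
    ring
  calc (k ! : A) * (coeff p (derivative A f) * coeff (k - p) g)
      = (k.choose p * (p + 1)! * (k - p)! : A) * (coeff (p + 1) f * coeff (k - p) g) := by
        rw [hfact, coeff_derivative]; ring
    _ = _ := by ring

theorem sum_range_eq_add_sum_Icc_add_add {M : Type*} [AddCommMonoid M] (f : ℕ → M) (m : ℕ) :
    ∑ p ∈ range (m + 3), f p = f 0 + ∑ j ∈ Icc 1 m, f j + f (m + 1) + f (m + 2) := by
  rw [sum_range_succ, sum_range_succ, sum_range_succ', ← Ico_add_one_right_eq_Icc,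
    sum_Ico_eq_sum_range]
  simp only [add_comm 1, Nat.add_sub_cancel]
  abel

theorem eq_of_sum_choose_mul_eq {K : Type*} [Field K] [CharZero K] {c : ℕ → K}
    (h0 : c 0 = 0) (h1 : c 1 = 1) {k : ℕ} (hk : 2 ≤ k)
    (h : ∑ p ∈ range (k + 1), (k.choose p : K) * c (p + 1) * c (k - p) = k * c (k - 1)) :
    c k = 1 / ((k : K) + 1) * (k * c (k - 1) -
      ∑ j ∈ Icc 1 (k - 2), (k.choose j : K) * c (j + 1) * c (k - j)) := by
  obtain ⟨m, rfl⟩ : ∃ m, k = m + 2 := ⟨k - 2, by omega⟩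
  rw [sum_range_eq_add_sum_Icc_add_add] at h
  simp only [Nat.choose_zero_right, Nat.choose_succ_self_right, Nat.choose_self, Nat.sub_zero,
    Nat.add_sub_cancel, Nat.sub_self, show m + 2 - (m + 1) = 1 by omega, h0, h1] at h ⊢
  rw [one_div, eq_inv_mul_iff_mul_eq₀ (Nat.cast_add_one_ne_zero _)]
  push_cast at h ⊢
  linear_combination h

/-- If `C(x) = Σ c_k x^k/k!` satisfies `C(x) - x²/2 = log(1+C(x))` with `c_0 = 0`,
`c_1 = 1`, then `C'(x)·C(x) = x·C(x) + x` and, for `k ≥ 2`,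
`c_k = (1/(k+1))·(k c_{k-1} - Σ_{j=1}^{k-2} C(k,j) c_{j+1} c_{k-j})`. -/
theorem recurrence_C (C : PowerSeries ℚ) (c : ℕ → ℚ)
    (hC0 : PowerSeries.constantCoeff C = 0)
    (hC1 : PowerSeries.coeff 1 C = 1)
    (hC : C - (1/2 : ℚ) • PowerSeries.X ^ 2 = pcomp logOneAdd C)
    (hc : ∀ k, c k = (Nat.factorial k : ℚ) * PowerSeries.coeff k C) :
    PowerSeries.derivative ℚ C * C = PowerSeries.X * C + PowerSeries.X ∧
      ∀ k : ℕ, 2 ≤ k →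
        c k = (1 / ((k : ℚ) + 1)) * ((k : ℚ) * c (k - 1) -
          ∑ j ∈ Finset.Icc 1 (k - 2), (Nat.choose k j : ℚ) * c (j + 1) * c (k - j)) := by
  have hODE := derivative_mul_self_eq_X_mul_add_X hC0 hC
  refine ⟨hODE, fun k hk => eq_of_sum_choose_mul_eq ?_ ?_ hk ?_⟩
  · rw [hc, coeff_zero_eq_constantCoeff_apply, hC0, mul_zero]
  · simp [hc, hC1]
  · obtain ⟨m, rfl⟩ : ∃ m, k = m + 1 := ⟨k - 1, by omega⟩
    have hcoeff := congrArg (fun f => ((m + 1)! : ℚ) * coeff (m + 1) f) hODE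
    simp only [factorial_mul_coeff_derivative_mul, ← hc, map_add, coeff_succ_X_mul,
      coeff_X, if_neg (show m + 1 ≠ 1 by omega), add_zero] at hcoeff
    rw [hcoeff, hc, Nat.factorial_succ, Nat.add_sub_cancel]
    push_cast
    ring
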